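/- arXiv:1912.07462 — 4 statements merged into one kernel-verified Lean document; each statement's English description precedes it below -/
import Mathlib

section
/- Let C be a category with a comonad ! and finite binary coproducts. For objects A, B of C, the object !A ⊕ !B equipped with the coprojections ι₁ : !A → !A ⊕ !B and ι₂ : !B → !A ⊕ !B is a weak binary coproduct of A and B in the co-Kleisli category C_!: for any pair of co-Kleisli morphisms f : !A → X and g : !B → X there exists a co-Kleisli morphism h : !(!A ⊕ !B) → X with h ∘ ι₁ = f and h ∘ ι₂ = g in C_! (uniqueness is not required). -/
open CategoryTheory CategoryTheory.Limits

universe v u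

/-- `ε_Z ≫ h` is the image of `h : Z ⟶ W` in the co-Kleisli category, and co-Kleisli
precomposition with it is ordinary precomposition with `h`. -/
lemma CategoryTheory.Comonad.delta_map_counit_comp {C : Type u} [Category.{v} C]
    (Q : Comonad C) {Y Z W : C} (u : Q.obj Y ⟶ Z) (h : Z ⟶ W) :
    Q.δ.app Y ≫ Q.map u ≫ Q.ε.app Z ≫ h = u ≫ h := by
  rw [← Category.assoc (Q.map u), Q.counit_naturality, Category.assoc, Q.left_counit_assoc]

/-- Let `C` be a category with a comonad `Q` (written `!`) and finite binary
coproducts. For objects `A, B` of `C`, the object `!A ⨿ !B` equipped with the coprojections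
`ι₁ : !A ⟶ !A ⨿ !B` and `ι₂ : !B ⟶ !A ⨿ !B` (viewed as co-Kleisli morphisms
`A → !A ⨿ !B` and `B → !A ⨿ !B`) is a weak binary coproduct of `A` and `B` in the
co-Kleisli category `C_!`: for any co-Kleisli morphisms `f : !A ⟶ X` and `g : !B ⟶ X`
there is a co-Kleisli morphism `h : !(!A ⨿ !B) ⟶ X` with `h ∘ ι₁ = f` and `h ∘ ι₂ = g`
in `C_!`, where co-Kleisli composition of `u : !Y ⟶ Z` and `v : !Z ⟶ W` is
`δ_Y ≫ !u ≫ v` (uniqueness of `h` is not required). -/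
theorem comonad_coKleisli_weak_coproduct
    {C : Type u} [Category.{v} C] [HasBinaryCoproducts C]
    (Q : Comonad C) (A B X : C) (f : Q.obj A ⟶ X) (g : Q.obj B ⟶ X) :
    ∃ h : Q.obj (Q.obj A ⨿ Q.obj B) ⟶ X,
      -- h ∘ ι₁ = f in the co-Kleisli category
      Q.δ.app A ≫ Q.map (coprod.inl : Q.obj A ⟶ Q.obj A ⨿ Q.obj B) ≫ h = f ∧
      -- h ∘ ι₂ = g in the co-Kleisli category
      Q.δ.app B ≫ Q.map (coprod.inr : Q.obj B ⟶ Q.obj A ⨿ Q.obj B) ≫ h = g :=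
  ⟨Q.ε.app _ ≫ coprod.desc f g,
    by rw [Q.delta_map_counit_comp, coprod.inl_desc],
    by rw [Q.delta_map_counit_comp, coprod.inr_desc]⟩
end

section
/- Dually to the co-Kleisli construction: if C is a category with a monad ? and finite products (1, &), then the Kleisli category C^? has weak finite products, with the weak product of A and B given by ?A & ?B, and 1 as weak terminal object. -/
open CategoryTheory CategoryTheory.Limits

universe v u

namespace CategoryTheory.Monad

variable {C : Type u} [Category.{v} C] (T : Monad C)

theorem η_app_map_μ_app {Y Z : C} (p : Y ⟶ T.obj Z) : T.η.app Y ≫ T.map p ≫ T.μ.app Z = p := by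
  rw [← T.η.naturality_assoc, Functor.id_map, T.left_unit, Category.comp_id]

end CategoryTheory.Monad

/-- Dually to the co-Kleisli construction: if `C` is a category with a monad
`T` (written `?`) and finite products `(⊤_ C, ⨯)`, then the Kleisli category `C^?`
(whose morphisms `A → B` are morphisms `A ⟶ ?B` of `C`, with composition
`u ; v = u ≫ ?v ≫ μ`) has weak finite products: the weak product of `A` and `B` is
`?A ⨯ ?B` with projections `π₁ : ?A ⨯ ?B ⟶ ?A` and `π₂ : ?A ⨯ ?B ⟶ ?B`
(viewed as Kleisli morphisms), and `⊤_ C` is a weak terminal object. -/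
theorem monad_kleisli_weak_products
    {C : Type u} [Category.{v} C] [HasFiniteProducts C]
    (T : Monad C) :
    -- ⊤_ C is a weak terminal object of the Kleisli category
    (∀ A : C, ∃ _t : A ⟶ T.obj (⊤_ C), True) ∧
    -- ?A ⨯ ?B, with the projections as Kleisli morphisms, is a weak binary product
    (∀ A B X : C, ∀ (f : X ⟶ T.obj A) (g : X ⟶ T.obj B),
      ∃ h : X ⟶ T.obj (T.obj A ⨯ T.obj B),
        -- π₁ ∘ h = f in the Kleisli category
        h ≫ T.map (prod.fst : T.obj A ⨯ T.obj B ⟶ T.obj A) ≫ T.μ.app A = f ∧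
        -- π₂ ∘ h = g in the Kleisli category
        h ≫ T.map (prod.snd : T.obj A ⨯ T.obj B ⟶ T.obj B) ≫ T.μ.app B = g) := by
  refine ⟨fun A => ⟨terminal.from A ≫ T.η.app _, trivial⟩,
    fun A B X f g => ⟨prod.lift f g ≫ T.η.app _, ?_, ?_⟩⟩
  · rw [Category.assoc, T.η_app_map_μ_app, prod.lift_fst]
  · rw [Category.assoc, T.η_app_map_μ_app, prod.lift_snd]
end

section
/- Let ? = (?, η, μ) be a monad and ! = (!, ε, δ) a comonad on a category C, together with a distributive law d : !? ⇒ ?! of ! over ?. Then the comonad ! lifts to a comonad on the Kleisli category C^?, the monad ? lifts to a monad on the co-Kleisli category C_!, and the resulting bi-Kleisli categories (C_!)^? and (C^?)_! are equivalent (indeed isomorphic), with hom-sets C(!A, ?B). -/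
/-!
Both lifts act on objects as `?` and `!` do. On a co-Kleisli map `f : !A ⟶ B` the lifted monad
acts by `d_A ≫ ?f`, and on a Kleisli map `f : A ⟶ ?B` the lifted comonad acts by `!f ≫ d_B`;
the unit and multiplication of the lifted monad are `ε ≫ η` and `ε ≫ μ`, the counit and
comultiplication of the lifted comonad are `ε ≫ η` and `δ ≫ η`. The four axioms of `d` are
exactly what makes these functorial and natural. A morphism `A ⟶ B` of either bi-Kleisli category
is a map `!A ⟶ ?B`, and in both categories `f` followed by `g` reduces to
`δ ≫ !f ≫ d ≫ ?g ≫ μ`, so the identity on objects and morphisms is an isomorphism of categories.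
-/

open CategoryTheory

universe v u

/-- Mathlib's `Kleisli` category as of December 2024: a type synonym for `C`,
with morphisms `X ⟶ T.obj Y`. -/
def OldKleisli {C : Type u} [Category.{v} C] (_T : Monad C) :=
  C

instance OldKleisli.category {C : Type u} [Category.{v} C] (T : Monad C) :
    Category.{v} (OldKleisli T) where
  Hom := fun X Y : C => X ⟶ (T : C ⥤ C).obj Y
  id X := T.η.app X
  comp {_} {_} {Z} f g := f ≫ (T : C ⥤ C).map g ≫ T.μ.app Z
  id_comp {X} {Y} f := by
    exact (fun (X Y : C) (f : X ⟶ T.obj Y) =>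
      (show T.η.app X ≫ T.map f ≫ T.μ.app Y = f by
        rw [← T.η.naturality_assoc f, T.left_unit]; apply Category.comp_id)) X Y f
  comp_id {X} {Y} f := by
    exact (fun (X Y : C) (f : X ⟶ T.obj Y) =>
      (show f ≫ T.map (T.η.app Y) ≫ T.μ.app Y = f by simp)) X Y f
  assoc {X} {Y} {Z} {W} f g h := by
    exact (fun (X Y Z W : C) (f : X ⟶ T.obj Y) (g : Y ⟶ T.obj Z) (h : Z ⟶ T.obj W) =>
      (show (f ≫ T.map g ≫ T.μ.app Z) ≫ T.map h ≫ T.μ.app W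
          = f ≫ T.map (g ≫ T.map h ≫ T.μ.app W) ≫ T.μ.app W by
        simp only [Functor.map_comp, Category.assoc, Monad.assoc]
        erw [T.μ.naturality_assoc])) X Y Z W f g h

/-- Mathlib's `Cokleisli` category as of December 2024: a type synonym for `C`,
with morphisms `U.obj X ⟶ Y`. -/
def OldCokleisli {C : Type u} [Category.{v} C] (_U : Comonad C) :=
  C

instance OldCokleisli.category {C : Type u} [Category.{v} C] (U : Comonad C) :
    Category.{v} (OldCokleisli U) where
  Hom := fun X Y : C => (U : C ⥤ C).obj X ⟶ Y
  id X := U.ε.app X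
  comp {X} {_} {_} f g := U.δ.app X ≫ (U : C ⥤ C).map f ≫ g
  id_comp {X} {Y} f := by
    exact (fun (X Y : C) (f : U.obj X ⟶ Y) =>
      (show U.δ.app X ≫ U.map (U.ε.app X) ≫ f = f by rw [U.right_counit_assoc])) X Y f
  comp_id {X} {Y} f := by
    exact (fun (X Y : C) (f : U.obj X ⟶ Y) =>
      (show U.δ.app X ≫ U.map f ≫ U.ε.app Y = f by simp)) X Y f
  assoc {X} {Y} {Z} {W} f g h := by
    exact (fun (X Y Z W : C) (f : U.obj X ⟶ Y) (g : U.obj Y ⟶ Z) (h : U.obj Z ⟶ W) =>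
      (show U.δ.app X ≫ U.map (U.δ.app X ≫ U.map f ≫ g) ≫ h
          = U.δ.app X ≫ U.map f ≫ U.δ.app Y ≫ U.map g ≫ h by
        simp only [Functor.map_comp, ← Category.assoc, U.δ.naturality_assoc, Functor.comp_map,
          U.coassoc])) X Y Z W f g h

section

variable {C : Type u} [Category.{v} C]

theorem CategoryTheory.Comonad.δ_map_ε_assoc (U : Comonad C) {X Y Z : C} (f : U.obj X ⟶ Y)
    (g : Y ⟶ Z) : U.δ.app X ≫ U.map f ≫ U.ε.app Y ≫ g = f ≫ g := by
  simp

theorem CategoryTheory.Monad.η_map_μ (T : Monad C) {X Y : C} (f : X ⟶ T.obj Y) :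
    T.η.app X ≫ T.map f ≫ T.μ.app Y = f := by
  rw [← T.η.naturality_assoc, T.left_unit, Category.comp_id, Functor.id_map]

structure DistributiveLaw (T : Monad C) (U : Comonad C) where
  d : T.toFunctor ⋙ U.toFunctor ⟶ U.toFunctor ⋙ T.toFunctor
  d_map_ε : ∀ A : C, d.app A ≫ T.map (U.ε.app A) = U.ε.app (T.obj A)
  d_map_δ : ∀ A : C,
    d.app A ≫ T.map (U.δ.app A) = U.δ.app (T.obj A) ≫ U.map (d.app A) ≫ d.app (U.obj A)
  map_η_d : ∀ A : C, U.map (T.η.app A) ≫ d.app A = T.η.app (U.obj A)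
  map_μ_d : ∀ A : C,
    U.map (T.μ.app A) ≫ d.app A = d.app (T.obj A) ≫ T.map (d.app A) ≫ T.μ.app (U.obj A)

namespace DistributiveLaw
variable {T : Monad C} {U : Comonad C} (law : DistributiveLaw T U)

theorem d_naturality {A B : C} (f : A ⟶ B) :
    U.map (T.map f) ≫ law.d.app B = law.d.app A ≫ T.map (U.map f) :=
  law.d.naturality f

def liftMonad : Monad (OldCokleisli U) where
  obj A := (T.obj A : C)
  map {A B} f := (law.d.app A ≫ T.map f : U.obj (T.obj A) ⟶ T.obj B)
  map_id A := law.d_map_ε A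
  map_comp {A B Z : C} f g := by
    show law.d.app A ≫ T.map (U.δ.app A ≫ U.map f ≫ g)
      = U.δ.app (T.obj A) ≫ U.map (law.d.app A ≫ T.map f) ≫ law.d.app B ≫ T.map g
    simp only [Functor.map_comp, Category.assoc, reassoc_of% law.d_map_δ,
      reassoc_of% law.d_naturality]
  η :=
    { app := fun A => (U.ε.app A ≫ T.η.app A : U.obj A ⟶ T.obj A)
      naturality := fun (A B : C) f => by
        show U.δ.app A ≫ U.map f ≫ U.ε.app B ≫ T.η.app B
          = U.δ.app A ≫ U.map (U.ε.app A ≫ T.η.app A) ≫ law.d.app A ≫ T.map f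
        rw [U.δ_map_ε_assoc, Functor.map_comp_assoc, U.right_counit_assoc,
          reassoc_of% (law.map_η_d A), T.unit_naturality] }
  μ :=
    { app := fun A => (U.ε.app (T.obj (T.obj A)) ≫ T.μ.app A :
        U.obj (T.obj (T.obj A)) ⟶ T.obj A)
      naturality := fun (A B : C) f => by
        show U.δ.app (T.obj (T.obj A)) ≫
            U.map (law.d.app (T.obj A) ≫ T.map (law.d.app A ≫ T.map f)) ≫
            U.ε.app (T.obj (T.obj B)) ≫ T.μ.app B
          = U.δ.app (T.obj (T.obj A)) ≫
            U.map (U.ε.app (T.obj (T.obj A)) ≫ T.μ.app A) ≫ law.d.app A ≫ T.map f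
        rw [U.δ_map_ε_assoc, Functor.map_comp_assoc, U.right_counit_assoc, reassoc_of% law.map_μ_d]
        simp only [Functor.map_comp, Category.assoc, T.mu_naturality] }
  left_unit := fun (A : C) => by
    show U.δ.app (T.obj A) ≫ U.map (U.ε.app (T.obj A) ≫ T.η.app (T.obj A)) ≫
        U.ε.app (T.obj (T.obj A)) ≫ T.μ.app A = U.ε.app (T.obj A)
    rw [U.δ_map_ε_assoc, Category.assoc, T.left_unit, Category.comp_id]
  right_unit := fun (A : C) => by
    show U.δ.app (T.obj A) ≫ U.map (law.d.app A ≫ T.map (U.ε.app A ≫ T.η.app A)) ≫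
        U.ε.app (T.obj (T.obj A)) ≫ T.μ.app A = U.ε.app (T.obj A)
    rw [U.δ_map_ε_assoc]
    simp only [Functor.map_comp, Category.assoc, T.right_unit, Category.comp_id, law.d_map_ε]
  assoc := fun (A : C) => by
    show U.δ.app (T.obj (T.obj (T.obj A))) ≫
        U.map (law.d.app (T.obj (T.obj A)) ≫ T.map (U.ε.app (T.obj (T.obj A)) ≫ T.μ.app A)) ≫
        U.ε.app (T.obj (T.obj A)) ≫ T.μ.app A
      = U.δ.app (T.obj (T.obj (T.obj A))) ≫
        U.map (U.ε.app (T.obj (T.obj (T.obj A))) ≫ T.μ.app (T.obj A)) ≫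
        U.ε.app (T.obj (T.obj A)) ≫ T.μ.app A
    rw [U.δ_map_ε_assoc, U.δ_map_ε_assoc]
    simp only [Functor.map_comp, Category.assoc, reassoc_of% law.d_map_ε, T.assoc]

def liftComonad : Comonad (OldKleisli T) where
  obj A := (U.obj A : C)
  map {A B} f := (U.map f ≫ law.d.app B : U.obj A ⟶ T.obj (U.obj B))
  map_id A := law.map_η_d A
  map_comp {A B Z : C} f g := by
    show U.map (f ≫ T.map g ≫ T.μ.app Z) ≫ law.d.app Z
      = (U.map f ≫ law.d.app B) ≫ T.map (U.map g ≫ law.d.app Z) ≫ T.μ.app (U.obj Z)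
    simp only [Functor.map_comp, Category.assoc, law.map_μ_d, reassoc_of% law.d_naturality]
  ε :=
    { app := fun A => (U.ε.app A ≫ T.η.app A : U.obj A ⟶ T.obj A)
      naturality := fun (A B : C) f => by
        show (U.map f ≫ law.d.app B) ≫ T.map (U.ε.app B ≫ T.η.app B) ≫ T.μ.app B
          = (U.ε.app A ≫ T.η.app A) ≫ T.map f ≫ T.μ.app B
        simp only [Category.assoc, T.η_map_μ, Functor.map_comp_assoc, T.right_unit,
          Category.comp_id, law.d_map_ε, U.counit_naturality] }
  δ :=
    { app := fun A => (U.δ.app A ≫ T.η.app (U.obj (U.obj A)) :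
        U.obj A ⟶ T.obj (U.obj (U.obj A)))
      naturality := fun (A B : C) f => by
        show (U.map f ≫ law.d.app B) ≫
            T.map (U.δ.app B ≫ T.η.app (U.obj (U.obj B))) ≫ T.μ.app (U.obj (U.obj B))
          = (U.δ.app A ≫ T.η.app (U.obj (U.obj A))) ≫
            T.map (U.map (U.map f ≫ law.d.app B) ≫ law.d.app (U.obj B)) ≫
            T.μ.app (U.obj (U.obj B))
        simp only [Category.assoc, T.η_map_μ]
        simp [law.d_map_δ] }
  coassoc := fun (A : C) => by
    show (U.δ.app A ≫ T.η.app (U.obj (U.obj A))) ≫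
        T.map (U.map (U.δ.app A ≫ T.η.app (U.obj (U.obj A))) ≫ law.d.app (U.obj (U.obj A))) ≫
        T.μ.app (U.obj (U.obj (U.obj A)))
      = (U.δ.app A ≫ T.η.app (U.obj (U.obj A))) ≫
        T.map (U.δ.app (U.obj A) ≫ T.η.app (U.obj (U.obj (U.obj A)))) ≫
        T.μ.app (U.obj (U.obj (U.obj A)))
    simp only [Category.assoc, T.η_map_μ]
    simp [law.map_η_d]
  left_counit := fun (A : C) => by
    show (U.δ.app A ≫ T.η.app (U.obj (U.obj A))) ≫
        T.map (U.ε.app (U.obj A) ≫ T.η.app (U.obj A)) ≫ T.μ.app (U.obj A)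
      = T.η.app (U.obj A)
    simp only [Category.assoc, T.η_map_μ, U.left_counit_assoc]
  right_counit := fun (A : C) => by
    show (U.δ.app A ≫ T.η.app (U.obj (U.obj A))) ≫
        T.map (U.map (U.ε.app A ≫ T.η.app A) ≫ law.d.app A) ≫ T.μ.app (U.obj A)
      = T.η.app (U.obj A)
    simp only [Category.assoc, T.η_map_μ]
    simp [law.map_η_d]

theorem liftMonad_kleisli_comp {A B Z : C} (f : U.obj A ⟶ T.obj B) (g : U.obj B ⟶ T.obj Z) :
    @CategoryStruct.comp (OldKleisli law.liftMonad) _ A B Z f g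
      = U.δ.app A ≫ U.map f ≫ law.d.app B ≫ T.map g ≫ T.μ.app Z := by
  show U.δ.app A ≫ U.map f ≫ U.δ.app (T.obj B) ≫ U.map (law.d.app B ≫ T.map g) ≫
      U.ε.app (T.obj (T.obj Z)) ≫ T.μ.app Z = _
  rw [U.δ_map_ε_assoc, Category.assoc]

theorem liftComonad_cokleisli_comp {A B Z : C} (f : U.obj A ⟶ T.obj B)
    (g : U.obj B ⟶ T.obj Z) :
    @CategoryStruct.comp (OldCokleisli law.liftComonad) _ A B Z f g
      = U.δ.app A ≫ U.map f ≫ law.d.app B ≫ T.map g ≫ T.μ.app Z := by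
  show (U.δ.app A ≫ T.η.app (U.obj (U.obj A))) ≫
      T.map ((U.map f ≫ law.d.app B) ≫ T.map g ≫ T.μ.app Z) ≫ T.μ.app Z = _
  rw [Category.assoc, T.η_map_μ]
  simp only [Category.assoc]

def biKleisliEquiv : OldKleisli law.liftMonad ≌ OldCokleisli law.liftComonad :=
  CategoryTheory.Equivalence.mk
    { obj A := (A : C)
      map f := f
      map_comp f g := (law.liftMonad_kleisli_comp f g).trans
        (law.liftComonad_cokleisli_comp f g).symm }
    { obj A := (A : C)
      map f := f
      map_comp f g := (law.liftComonad_cokleisli_comp f g).trans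
        (law.liftMonad_kleisli_comp f g).symm }
    (Iso.refl _) (Iso.refl _)

end DistributiveLaw

end

/-- Let `T = (?, η, μ)` be a monad and `U = (!, ε, δ)` a comonad on a
category `C`, together with a distributive law `d : !? ⇒ ?!` of `!` over `?`
(satisfying `?ε ∘ d = ε?`, `?δ ∘ d = d! ∘ !d ∘ δ?`, `d ∘ !η = η!`, and
`d ∘ !μ = μ! ∘ ?d ∘ d?`). Then the comonad `!` lifts to a comonad on the Kleisli
category `C^?`, the monad `?` lifts to a monad on the co-Kleisli category `C_!`, and
the resulting bi-Kleisli categories `(C_!)^?` and `(C^?)_!` are equivalent (indeed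
isomorphic), with hom-sets `C(!A, ?B)`. -/
theorem distributive_law_biKleisli
    {C : Type u} [Category.{v} C]
    (T : Monad C) (U : Comonad C)
    (d : (T.toFunctor ⋙ U.toFunctor) ⟶ (U.toFunctor ⋙ T.toFunctor))
    (h1 : ∀ A : C, d.app A ≫ T.map (U.ε.app A) = U.ε.app (T.obj A))
    (h2 : ∀ A : C, d.app A ≫ T.map (U.δ.app A)
        = U.δ.app (T.obj A) ≫ U.map (d.app A) ≫ d.app (U.obj A))
    (h3 : ∀ A : C, U.map (T.η.app A) ≫ d.app A = T.η.app (U.obj A))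
    (h4 : ∀ A : C, U.map (T.μ.app A) ≫ d.app A
        = d.app (T.obj A) ≫ T.map (d.app A) ≫ T.μ.app (U.obj A)) :
    -- the monad ? lifts to the co-Kleisli category C_! , the comonad ! lifts to the
    -- Kleisli category C^? (acting as ? and ! on objects), and the two bi-Kleisli
    -- categories are equivalent, with hom-sets C(!A, ?B)
    ∃ (T' : Monad (OldCokleisli U)) (U' : Comonad (OldKleisli T)),
      (∀ A : C, T'.obj (show OldCokleisli U from A) = (show OldCokleisli U from T.obj A)) ∧
      (∀ A : C, U'.obj (show OldKleisli T from A) = (show OldKleisli T from U.obj A)) ∧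
      -- hom-sets of the bi-Kleisli category (C_!)^? are C(!A, ?B)
      (∀ A B : C,
        ((show OldKleisli T' from (show OldCokleisli U from A)) ⟶
            (show OldKleisli T' from (show OldCokleisli U from B)))
          = (U.obj A ⟶ T.obj B)) ∧
      -- hom-sets of the bi-Kleisli category (C^?)_! are C(!A, ?B)
      (∀ A B : C,
        ((show OldCokleisli U' from (show OldKleisli T from A)) ⟶
            (show OldCokleisli U' from (show OldKleisli T from B)))
          = (U.obj A ⟶ T.obj B)) ∧
      Nonempty (OldKleisli T' ≌ OldCokleisli U') := by
  let law : DistributiveLaw T U := ⟨d, h1, h2, h3, h4⟩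
  exact ⟨law.liftMonad, law.liftComonad, fun _ => rfl, fun _ => rfl, fun _ _ => rfl,
    fun _ _ => rfl, ⟨law.biKleisliEquiv⟩⟩
end

section
/- The unrestricted tensor-right rule is admissible in LLK⁻: if Δ₁ ⊢ B₁, Γ₁ and Δ₂ ⊢ B₂, Γ₂ are provable in LLK⁻, then Δ₁, Δ₂ ⊢ B₁ ⊗ B₂, Γ₁, Γ₂ is provable in LLK⁻. -/
/-- Formulas of linear logic negative (LL⁻): linear logic without linear negation. -/
inductive LForm : Type
  | top | bot | one | zero
  | tensor (A B : LForm) | par (A B : LForm)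
  | with' (A B : LForm) | plus (A B : LForm)
  | limp (A B : LForm)
  | oc (A : LForm) | wn (A : LForm)

open LForm

/-- The sequent calculus LLK⁻ for linear logic negative: sequents `Δ ⊢ Γ` with `Δ, Γ`
lists of formulas.  It is the two-sided sequent calculus for classical linear logic
without linear negation, with Cut, ⊗R, ⅋L, &R, ⊕L, ⊸R restricted to Cut⁻, ⊗R⁻, ⅋L⁻,
&R⁻, ⊕L⁻, ⊸R⁻, and with the distribution rules !?L, !?R, ⊗⅋L, ⊗⅋R added. -/
inductive LLKm : List LForm → List LForm → Prop
  -- distribution rules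
  | ocwnL {Δ Γ A} : LLKm (Δ ++ [wn (oc A)]) Γ → LLKm (Δ ++ [oc (wn A)]) Γ
  | ocwnR {Δ Γ B} : LLKm Δ (oc (wn B) :: Γ) → LLKm Δ (wn (oc B) :: Γ)
  | tensorParL {Δ Γ A B C} :
      LLKm (Δ ++ [par (tensor A B) C]) Γ → LLKm (Δ ++ [A, par B C]) Γ
  | tensorParR {Δ Γ A B C} :
      LLKm Δ (tensor A (par B C) :: Γ) → LLKm Δ (tensor A B :: C :: Γ)
  -- identity and (restricted) cut
  | id (A) : LLKm [A] [A]
  | cutm {Δ Δ' Γ' B} : LLKm Δ [B] → LLKm (Δ' ++ [B]) Γ' → LLKm (Δ ++ Δ') Γ'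
  -- exchange
  | xl {Δ Δ' Γ A A'} :
      LLKm (Δ ++ A :: A' :: Δ') Γ → LLKm (Δ ++ A' :: A :: Δ') Γ
  | xr {Δ Γ Γ' B B'} :
      LLKm Δ (Γ ++ B :: B' :: Γ') → LLKm Δ (Γ ++ B' :: B :: Γ')
  -- weakening, contraction, dereliction for the exponentials
  | ocW {Δ Γ A} : LLKm Δ Γ → LLKm (Δ ++ [oc A]) Γ
  | wnW {Δ Γ B} : LLKm Δ Γ → LLKm Δ (wn B :: Γ)
  | ocC {Δ Γ A} : LLKm (Δ ++ [oc A, oc A]) Γ → LLKm (Δ ++ [oc A]) Γ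
  | wnC {Δ Γ B} : LLKm Δ (wn B :: wn B :: Γ) → LLKm Δ (wn B :: Γ)
  | ocD {Δ Γ A} : LLKm (Δ ++ [A]) Γ → LLKm (Δ ++ [oc A]) Γ
  | wnD {Δ Γ B} : LLKm Δ (B :: Γ) → LLKm Δ (wn B :: Γ)
  -- promotion-style rules (with !-context on the left and ?-context on the right)
  | wnL {Δ Γ : List LForm} {A} :
      LLKm (Δ.map oc ++ [A]) (Γ.map wn) → LLKm (Δ.map oc ++ [wn A]) (Γ.map wn)
  | ocR {Δ Γ : List LForm} {B} :
      LLKm (Δ.map oc) (B :: Γ.map wn) → LLKm (Δ.map oc) (oc B :: Γ.map wn)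
  -- constants
  | zeroL (Γ) : LLKm [zero] Γ
  | oneR (Δ Γ) : LLKm Δ (one :: Γ)
  | topL {Δ Γ} : LLKm Δ Γ → LLKm (Δ ++ [top]) Γ
  | topR : LLKm [] [top]
  | botL : LLKm [bot] []
  | botR {Δ Γ} : LLKm Δ Γ → LLKm Δ (bot :: Γ)
  -- multiplicatives
  | tensorL {Δ Γ A₁ A₂} :
      LLKm (Δ ++ [A₁, A₂]) Γ → LLKm (Δ ++ [tensor A₁ A₂]) Γ
  | tensorRm {Δ₁ Δ₂ B₁ B₂} :
      LLKm Δ₁ [B₁] → LLKm Δ₂ [B₂] → LLKm (Δ₁ ++ Δ₂) [tensor B₁ B₂]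
  | parLm {Γ₁ Γ₂ A₁ A₂} :
      LLKm [A₁] Γ₁ → LLKm [A₂] Γ₂ → LLKm [par A₁ A₂] (Γ₁ ++ Γ₂)
  | parR {Δ Γ B₁ B₂} : LLKm Δ (B₁ :: B₂ :: Γ) → LLKm Δ (par B₁ B₂ :: Γ)
  -- additives
  | withL1 {Δ Γ A₁ A₂} : LLKm (Δ ++ [A₁]) Γ → LLKm (Δ ++ [with' A₁ A₂]) Γ
  | withL2 {Δ Γ A₁ A₂} : LLKm (Δ ++ [A₂]) Γ → LLKm (Δ ++ [with' A₁ A₂]) Γ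
  | withRm {Δ B₁ B₂} : LLKm Δ [B₁] → LLKm Δ [B₂] → LLKm Δ [with' B₁ B₂]
  | plusLm {Γ A₁ A₂} : LLKm [A₁] Γ → LLKm [A₂] Γ → LLKm [plus A₁ A₂] Γ
  | plusR1 {Δ Γ B₁ B₂} : LLKm Δ (B₁ :: Γ) → LLKm Δ (plus B₁ B₂ :: Γ)
  | plusR2 {Δ Γ B₁ B₂} : LLKm Δ (B₂ :: Γ) → LLKm Δ (plus B₁ B₂ :: Γ)
  -- linear implication
  | limpL {Δ₁ Δ₂ Γ₁ Γ₂ A B} :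
      LLKm Δ₁ (A :: Γ₁) → LLKm (Δ₂ ++ [B]) Γ₂ →
      LLKm (Δ₁ ++ Δ₂ ++ [limp A B]) (Γ₁ ++ Γ₂)
  | limpRm {Γ A B} : LLKm [A] (B :: Γ) → LLKm [] (limp A B :: Γ)

/-- Left-nested par of a head formula with a list. -/
def plfold (B : LForm) (Γ : List LForm) : LForm := Γ.foldl LForm.par B

lemma plfold_append (B C : LForm) (Γ : List LForm) :
    plfold B (Γ ++ [C]) = LForm.par (plfold B Γ) C := by
  simp [plfold]

lemma LLKm.pack {Δ Γ : List LForm} {B : LForm} (h : LLKm Δ (B :: Γ)) :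
    LLKm Δ [plfold B Γ] := by
  induction Γ generalizing B with
  | nil => exact h
  | cons C Γ ih => exact ih (LLKm.parR h)

lemma LLKm.rot' {Δ : List LForm} {B : LForm} (Θ Γ : List LForm)
    (h : LLKm Δ (Θ ++ Γ ++ [B])) : LLKm Δ (Θ ++ B :: Γ) := by
  induction Γ generalizing Θ with
  | nil => simpa using h
  | cons C Γ ih =>
    have h1 := ih (Θ ++ [C]) (by simpa using h)
    exact LLKm.xr (Γ := Θ) (by simpa using h1)

lemma LLKm.subst_head {Δ Γ : List LForm} {A B : LForm}
    (hab : LLKm [A] [B]) (h : LLKm Δ (A :: Γ)) : LLKm Δ (B :: Γ) := by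
  have himp : LLKm [] [LForm.limp A B] := LLKm.limpRm hab
  have hl : LLKm (Δ ++ [] ++ [LForm.limp A B]) (Γ ++ [B]) :=
    LLKm.limpL h (Δ₂ := []) (LLKm.id B)
  have hc : LLKm ([] ++ Δ) (Γ ++ [B]) := LLKm.cutm himp (by simpa using hl)
  exact LLKm.rot' [] Γ (by simpa using hc)

lemma LLKm.tcomm (A B : LForm) :
    LLKm [LForm.tensor A B] [LForm.tensor B A] := by
  have h : LLKm ([B] ++ [A]) [LForm.tensor B A] :=
    LLKm.tensorRm (LLKm.id B) (LLKm.id A)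
  have h2 : LLKm (([] : List LForm) ++ A :: B :: []) [LForm.tensor B A] :=
    LLKm.xl (by simpa using h)
  exact LLKm.tensorL (Δ := []) (by simpa using h2)

lemma LLKm.dist {Δ : List LForm} {B A : LForm} (Γ₂ : List LForm) {Γ : List LForm}
    (h : LLKm Δ (LForm.tensor A (plfold B Γ₂) :: Γ)) :
    LLKm Δ (LForm.tensor A B :: (Γ₂ ++ Γ)) := by
  induction Γ₂ using List.reverseRecOn generalizing Γ with
  | nil => simpa [plfold] using h
  | append_singleton Γ₂ C ih =>
    rw [plfold_append] at h
    have h1 := LLKm.tensorParR h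
    have h2 := ih h1
    simpa using h2

/-- The unrestricted tensor-right rule is admissible in LLK⁻: if
`Δ₁ ⊢ B₁, Γ₁` and `Δ₂ ⊢ B₂, Γ₂` are provable in LLK⁻, then
`Δ₁, Δ₂ ⊢ B₁ ⊗ B₂, Γ₁, Γ₂` is provable in LLK⁻. -/
theorem LLKm_tensorR_admissible {Δ₁ Δ₂ Γ₁ Γ₂ : List LForm} {B₁ B₂ : LForm}
    (h₁ : LLKm Δ₁ (B₁ :: Γ₁)) (h₂ : LLKm Δ₂ (B₂ :: Γ₂)) :
    LLKm (Δ₁ ++ Δ₂) (LForm.tensor B₁ B₂ :: (Γ₁ ++ Γ₂)) := by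
  have p1 := LLKm.pack h₁
  have p2 := LLKm.pack h₂
  have t := LLKm.tensorRm p1 p2
  have d1 := LLKm.dist Γ₂ (Γ := []) t
  have c1 := LLKm.subst_head (LLKm.tcomm _ _) d1
  have d2 := LLKm.dist Γ₁ c1
  have c2 := LLKm.subst_head (LLKm.tcomm _ _) d2
  simpa using c2
end
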